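/- Let h : 𝔹ⁿ → ℝⁿ be harmonic with h(0) = 0, and suppose all partial derivatives of h up to order 2m−1 vanish at 0. Define h_j(x) = j^{2m}·h(x/j) for j > 1. Then the family {h_j : j ∈ ℕ, j > 1} is uniformly bounded on 𝔹ⁿ, i.e. there exists C > 0 with ‖h_j(x)‖ ≤ C for all j > 1 and all x ∈ 𝔹ⁿ. -/

import Mathlib

open Metric Set

/-- A real-valued function is harmonic on a set: smooth with vanishing Laplacian. -/
def HarmonicOn {n : ℕ} (u : EuclideanSpace ℝ (Fin n) → ℝ)
    (s : Set (EuclideanSpace ℝ (Fin n))) : Prop :=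
  ContDiffOn ℝ (⊤ : ℕ∞) u s ∧
    ∀ x ∈ s, ∑ i : Fin n,
      iteratedFDeriv ℝ 2 u x ![EuclideanSpace.single i 1, EuclideanSpace.single i 1] = 0

/-- A map is (Euclidean) harmonic on a set if each coordinate function is harmonic. -/
def HarmonicOnMap {n : ℕ} (h : EuclideanSpace ℝ (Fin n) → EuclideanSpace ℝ (Fin n))
    (s : Set (EuclideanSpace ℝ (Fin n))) : Prop :=
  ∀ i : Fin n, HarmonicOn (fun x => h x i) s

/-- Taylor-type bound: if `f` is smooth on the unit ball and its iterated derivatives of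
order `< N` vanish at `0`, while the `N`-th derivative is bounded by `M` on the closed
half-ball, then `‖iteratedFDeriv (N-d) f y‖ ≤ M ‖y‖^d` there. -/
lemma taylor_pow_bound {E F : Type*} [NormedAddCommGroup E] [NormedSpace ℝ E]
    [NormedAddCommGroup F] [NormedSpace ℝ F] (f : E → F) (N : ℕ)
    (hf : ContDiffOn ℝ (⊤ : ℕ∞) f (ball 0 1))
    (hv : ∀ k, k < N → iteratedFDeriv ℝ k f 0 = 0) (M : ℝ)
    (hM : ∀ y ∈ closedBall (0 : E) (1/2), ‖iteratedFDeriv ℝ N f y‖ ≤ M) :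
    ∀ d, d ≤ N → ∀ y ∈ closedBall (0 : E) (1/2), ‖iteratedFDeriv ℝ (N - d) f y‖ ≤ M * ‖y‖ ^ d := by
  have hcb : closedBall (0 : E) (1/2) ⊆ ball 0 1 := closedBall_subset_ball (by norm_num)
  intro d
  induction d with
  | zero => intro _ y hy; simpa using hM y hy
  | succ d IH =>
    intro hdN y hy
    have hIH := IH (Nat.le_of_succ_le hdN)
    set k := N - (d + 1) with hk
    have hk1 : k + 1 = N - d := by omega
    have hyr : ‖y‖ ≤ 1/2 := by simpa [dist_eq_norm] using hy
    have hsub : closedBall (0 : E) ‖y‖ ⊆ closedBall (0 : E) (1/2) :=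
      closedBall_subset_closedBall hyr
    -- differentiability of the iterated derivative on the ball
    have hdiff : ∀ z ∈ ball (0 : E) 1, DifferentiableAt ℝ (iteratedFDeriv ℝ k f) z := by
      intro z hz
      have h1 : DifferentiableWithinAt ℝ (iteratedFDerivWithin ℝ k f (ball 0 1)) (ball 0 1) z :=
        hf.differentiableOn_iteratedFDerivWithin (by exact_mod_cast lt_top_iff_ne_top.2 (by simp))
          isOpen_ball.uniqueDiffOn z hz
      have h2 : DifferentiableWithinAt ℝ (iteratedFDeriv ℝ k f) (ball 0 1) z :=
        h1.congr (fun w hw => (iteratedFDerivWithin_of_isOpen k isOpen_ball hw).symm)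
          (iteratedFDerivWithin_of_isOpen k isOpen_ball hz).symm
      exact h2.differentiableAt (isOpen_ball.mem_nhds hz)
    have hM0 : 0 ≤ M := le_trans (norm_nonneg _) (hM 0 (mem_closedBall_self (by norm_num)))
    have key :
        ‖iteratedFDeriv ℝ k f y - iteratedFDeriv ℝ k f 0‖ ≤ M * ‖y‖ ^ d * ‖y - 0‖ := by
      apply (convex_closedBall (0 : E) ‖y‖).norm_image_sub_le_of_norm_hasFDerivWithin_le
        (f' := fun z => fderiv ℝ (iteratedFDeriv ℝ k f) z)
      · intro z hz
        exact ((hdiff z (hcb (hsub hz))).hasFDerivAt).hasFDerivWithinAt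
      · intro z hz
        have hz2 : z ∈ closedBall (0 : E) (1/2) := hsub hz
        have hzy : ‖z‖ ≤ ‖y‖ := by simpa [dist_eq_norm] using hz
        calc ‖fderiv ℝ (iteratedFDeriv ℝ k f) z‖ = ‖iteratedFDeriv ℝ (k + 1) f z‖ :=
              norm_fderiv_iteratedFDeriv
          _ = ‖iteratedFDeriv ℝ (N - d) f z‖ := by rw [hk1]
          _ ≤ M * ‖z‖ ^ d := hIH z hz2
          _ ≤ M * ‖y‖ ^ d := by
              gcongr
      · exact mem_closedBall_self (norm_nonneg _)
      · simpa [dist_eq_norm] using le_refl ‖y‖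
    have h0 : iteratedFDeriv ℝ k f 0 = 0 := hv k (by omega)
    rw [h0, sub_zero] at key
    calc ‖iteratedFDeriv ℝ k f y‖ ≤ M * ‖y‖ ^ d * ‖y - 0‖ := key
      _ = M * ‖y‖ ^ (d + 1) := by rw [sub_zero]; ring

/-- If `h` is harmonic on the unit ball with all derivatives of order `≤ 2m - 1` vanishing at
`0`, then the rescalings `h_j x = j^(2m) h (x / j)`, `j > 1`, are uniformly bounded on `𝔹ⁿ`. -/
theorem rescaled_family_uniformly_bounded {n : ℕ} (m : ℕ) (hm : 1 ≤ m)
    (h : EuclideanSpace ℝ (Fin n) → EuclideanSpace ℝ (Fin n))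
    (hharm : HarmonicOnMap h (ball 0 1)) (h0 : h 0 = 0)
    (hvanish : ∀ k : ℕ, k ≤ 2 * m - 1 → iteratedFDeriv ℝ k h 0 = 0) :
    ∃ C : ℝ, 0 < C ∧ ∀ j : ℕ, 1 < j → ∀ x ∈ ball (0 : EuclideanSpace ℝ (Fin n)) 1,
      ‖(j : ℝ) ^ (2 * m) • h ((j : ℝ)⁻¹ • x)‖ ≤ C := by
  have hsmooth : ContDiffOn ℝ (⊤ : ℕ∞) h (ball 0 1) :=
    contDiffOn_euclidean.2 fun i => (hharm i).1
  set N := 2 * m with hN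
  -- bound for the N-th derivative on the closed half-ball
  have hcb : closedBall (0 : EuclideanSpace ℝ (Fin n)) (1/2) ⊆ ball 0 1 :=
    closedBall_subset_ball (by norm_num)
  have hcont : ContinuousOn (iteratedFDeriv ℝ N h) (closedBall (0 : EuclideanSpace ℝ (Fin n)) (1/2)) := by
    have h1 : ContinuousOn (iteratedFDerivWithin ℝ N h (ball 0 1)) (ball 0 1) :=
      hsmooth.continuousOn_iteratedFDerivWithin (mod_cast le_top) isOpen_ball.uniqueDiffOn
    exact ((h1.congr (iteratedFDerivWithin_of_isOpen N isOpen_ball).symm).mono hcb)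
  obtain ⟨M, hM⟩ := (isCompact_closedBall (0 : EuclideanSpace ℝ (Fin n)) (1/2)).exists_bound_of_continuousOn hcont
  have hM0 : 0 ≤ M := le_trans (norm_nonneg _) (hM 0 (mem_closedBall_self (by norm_num)))
  have hv : ∀ k, k < N → iteratedFDeriv ℝ k h 0 = 0 := fun k hk => hvanish k (by omega)
  have key := taylor_pow_bound h N hsmooth hv M hM N le_rfl
  refine ⟨M + 1, by linarith, fun j hj x hx => ?_⟩
  have hj2 : (2 : ℝ) ≤ (j : ℝ) := by exact_mod_cast hj
  have hj0 : (0 : ℝ) < (j : ℝ) := by linarith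
  have hx1 : ‖x‖ < 1 := by simpa [dist_eq_norm] using hx
  set y := (j : ℝ)⁻¹ • x with hy
  have hny : ‖y‖ = (j : ℝ)⁻¹ * ‖x‖ := by
    rw [hy, norm_smul, Real.norm_eq_abs, abs_of_pos (by positivity)]
  have hymem : y ∈ closedBall (0 : EuclideanSpace ℝ (Fin n)) (1/2) := by
    simp only [mem_closedBall, dist_eq_norm, sub_zero]
    rw [hny]
    calc (j : ℝ)⁻¹ * ‖x‖ ≤ (j : ℝ)⁻¹ * 1 := by
          apply mul_le_mul_of_nonneg_left hx1.le (by positivity)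
      _ ≤ 1/2 := by
          rw [mul_one]
          rw [inv_le_comm₀ hj0 (by norm_num)]
          linarith
  have hb := key y hymem
  rw [Nat.sub_self, norm_iteratedFDeriv_zero] at hb
  have : ‖(j : ℝ) ^ N • h y‖ = (j : ℝ) ^ N * ‖h y‖ := by
    rw [norm_smul, Real.norm_eq_abs, abs_of_pos (by positivity)]
  rw [this]
  calc (j : ℝ) ^ N * ‖h y‖ ≤ (j : ℝ) ^ N * (M * ‖y‖ ^ N) := by
        apply mul_le_mul_of_nonneg_left hb (by positivity)
    _ = M * ‖x‖ ^ N := by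
        rw [hny, mul_pow]
        field_simp
        rw [one_div, inv_pow, mul_comm ((j:ℝ)^N) M, mul_assoc M, mul_inv_cancel₀ (pow_pos hj0 N).ne', mul_one]
    _ ≤ M * 1 := by
        apply mul_le_mul_of_nonneg_left _ hM0
        exact pow_le_one₀ (norm_nonneg _) hx1.le
    _ ≤ M + 1 := by linarith
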